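/- Let G be a primitive permutation group on product space Ω = Δ^k with G ≤ H wr S_k in product action (k ≥ 2), primitive component H on Δ, and let K ≤ S_k be the image of G under the natural projection G → S_k. If K has an orbit of length ℓ on the set of r-element subsets of {1,…,k} for some r ≤ k, then G has a subdegree divisible by ℓ. -/

import Mathlib

/-!
Fix `δ ≠ δ'` in `Δ`, let `α` be the constant point `δ` and `β` the point equal to `δ'` exactly
on `J`. An element of `G_α` with top permutation `σ` fixes `δ` in every coordinate, so the map
`γ ↦ {i | γ i ≠ δ}` sends `s • γ` to `σ • {i | γ i ≠ δ}`; stabilisers can only grow along an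
equivariant map, so the `G_α`-orbit of `J` has length dividing `|β ^ G_α|`.

It remains to see that `G_α` projects onto all of `K`, i.e. `G = G_α N` for the kernel `N` of
`G → S_k`. If `N = 1`, then `|Δ|^k` divides `|G|`, which divides `k!`; this is impossible since
for a prime `p ∣ |Δ|` the `p`-adic valuation of `k!` is less than `k`. So `N` is a nontrivial
normal subgroup of a primitive group, hence transitive, and then `G = G_α N`.
-/

/-- A group action is primitive if it is transitive and every block is trivial. -/
def IsPrimitiveAction (G Ω : Type*) [Group G] [MulAction G Ω] : Prop :=
  MulAction.IsPretransitive G Ω ∧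
    ∀ B : Set Ω, MulAction.IsBlock G B → B.Subsingleton ∨ B = Set.univ

/-- A permutation `g` of `Δ^k` has product form `(σ, f)` (relative to the
permutation group `H ≤ Sym(Δ)`) if it acts by `(g x) i = f i (x (σ⁻¹ i))`, with
each coordinate permutation `f i` lying in `H`.  This expresses membership of `g`
in the wreath product `H wr S_k` in product action. -/
def IsProductForm {Δ : Type*} (k : ℕ) (H : Subgroup (Equiv.Perm Δ))
    (g : Equiv.Perm (Fin k → Δ)) (σ : Equiv.Perm (Fin k))
    (f : Fin k → Equiv.Perm Δ) : Prop :=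
  (∀ i, f i ∈ H) ∧ ∀ (x : Fin k → Δ) (i : Fin k), g x i = f i (x (σ.symm i))

open MulAction Pointwise

theorem Nat.not_pow_dvd_factorial {n k : ℕ} (hn : 2 ≤ n) (hk : k ≠ 0) : ¬ n ^ k ∣ k.factorial := by
  intro h
  have : Fact n.minFac.Prime := ⟨Nat.minFac_prime (by omega)⟩
  have hp : n.minFac ^ k ∣ k.factorial := (pow_dvd_pow_of_dvd n.minFac_dvd k).trans h
  rw [padicValNat_dvd_iff_le k.factorial_ne_zero] at hp
  exact (padicValNat_factorial_lt_of_ne_zero n.minFac hk).not_ge hp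

theorem IsPrimitiveAction.isPreprimitive {G Ω : Type*} [Group G] [MulAction G Ω]
    (h : IsPrimitiveAction G Ω) : IsPreprimitive G Ω :=
  { toIsPretransitive := h.1, isTrivialBlock_of_isBlock := fun hB => h.2 _ hB }

namespace MulAction

theorem card_orbit_range_dvd_of_map_smul {S M X Y : Type*} [Group S] [Group M] [MulAction S X]
    [MulAction M Y] (φ : S →* M) (f : X → Y) (hf : ∀ (s : S) x, f (s • x) = φ s • f x) (x : X) :
    Nat.card (orbit φ.range (f x)) ∣ Nat.card (orbit S x) := by
  simp only [Nat.card_coe_set_eq, ← index_stabilizer]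
  rw [← Subgroup.index_comap_of_surjective _ φ.rangeRestrict_surjective]
  refine Subgroup.index_dvd_of_le fun s hs => ?_
  rw [Subgroup.mem_comap, mem_stabilizer_iff, Subgroup.smul_def, MonoidHom.coe_rangeRestrict,
    ← hf, mem_stabilizer_iff.mp hs]

variable {G X : Type*} [Group G] [MulAction G X]

theorem stabilizer_sup_eq_top_of_normal [FaithfulSMul G X] [IsQuasiPreprimitive G X]
    {N : Subgroup G} [N.Normal] (hN : N ≠ ⊥) (a : X) : stabilizer G a ⊔ N = ⊤ := by
  have : IsPretransitive N X := IsQuasiPreprimitive.isPretransitive_of_normal fun hfix => hN <|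
    (Subgroup.eq_bot_iff_forall N).mpr fun n hn => eq_of_smul_eq_smul fun x => by
      rw [one_smul]
      exact Set.eq_univ_iff_forall.mp hfix x ⟨n, hn⟩
  refine eq_top_iff.mpr fun g _ => ?_
  obtain ⟨n, hn⟩ := exists_smul_eq N a (g • a)
  have hstab : (n : G)⁻¹ * g ∈ stabilizer G a := by
    rw [mem_stabilizer_iff, mul_smul, ← hn, Subgroup.smul_def, inv_smul_smul]
  rw [sup_comm]
  simpa using Subgroup.mul_mem_sup n.2 hstab

theorem range_comp_stabilizer_subtype [FaithfulSMul G X] [IsQuasiPreprimitive G X] {M : Type*}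
    [Group M] (φ : G →* M) (hφ : ¬ Function.Injective φ) (a : X) :
    (φ.comp (stabilizer G a).subtype).range = φ.range := by
  rw [MonoidHom.range_comp, Subgroup.range_subtype, MonoidHom.range_eq_map, Subgroup.map_eq_map_iff,
    top_sup_eq, stabilizer_sup_eq_top_of_normal (mt (MonoidHom.ker_eq_bot_iff φ).mp hφ)]

end MulAction

theorem not_injective_of_isPretransitive_pi {G : Type*} [Group G] (Δ : Type*) [Finite Δ]
    [Nontrivial Δ] {k : ℕ} (hk : k ≠ 0) [MulAction G (Fin k → Δ)]
    [IsPretransitive G (Fin k → Δ)] (φ : G →* Equiv.Perm (Fin k)) : ¬ Function.Injective φ := by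
  intro hφ
  have hG : Nat.card G ∣ k.factorial := by
    simpa [Fintype.card_perm] using Subgroup.card_dvd_of_injective φ hφ
  have hΩ : Nat.card Δ ^ k ∣ Nat.card G := by
    have := (stabilizer G (Classical.arbitrary (Fin k → Δ))).index_dvd_card
    rwa [index_stabilizer, orbit_eq_univ, Set.ncard_univ, Nat.card_fun, Nat.card_fin] at this
  exact Nat.not_pow_dvd_factorial Finite.one_lt_card hk (hΩ.trans hG)

def coordsNe {Δ : Type*} [DecidableEq Δ] {k : ℕ} (δ : Δ) (x : Fin k → Δ) : Finset (Fin k) :=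
  {i | x i ≠ δ}

namespace IsProductForm

variable {Δ : Type*} {k : ℕ} {H : Subgroup (Equiv.Perm Δ)} {g g' : Equiv.Perm (Fin k → Δ)}
  {σ σ' : Equiv.Perm (Fin k)} {f f' : Fin k → Equiv.Perm Δ}

theorem one : IsProductForm k H 1 1 (fun _ => 1) :=
  ⟨fun _ => H.one_mem, fun _ _ => rfl⟩

theorem mul (h : IsProductForm k H g σ f) (h' : IsProductForm k H g' σ' f') :
    IsProductForm k H (g * g') (σ * σ') (fun i => f i * f' (σ.symm i)) :=
  ⟨fun i => H.mul_mem (h.1 i) (h'.1 _), fun x i => by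
    rw [Equiv.Perm.mul_apply, h.2, h'.2]
    rfl⟩

/-- The coordinate `(g x) i` depends only on `x (σ⁻¹ i)`, so `g` determines `σ`. -/
theorem perm_unique [Nontrivial Δ] (h : IsProductForm k H g σ f)
    (h' : IsProductForm k H g σ' f') : σ = σ' := by
  classical
  obtain ⟨a, b, hab⟩ := exists_pair_ne Δ
  refine Equiv.symm_bijective.injective (Equiv.ext fun i => by_contra fun hne => hab ?_)
  let x : Fin k → Δ := Function.update (fun _ => b) (σ.symm i) a
  have hxa : f i a = f' i b := by
    simpa [x, Ne.symm hne] using (h.2 x i).symm.trans (h'.2 x i)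
  have hxb : f i b = f' i b := (h.2 (fun _ => b) i).symm.trans (h'.2 _ i)
  exact (f i).injective (hxa.trans hxb.symm)

theorem coordsNe_apply [DecidableEq Δ] (h : IsProductForm k H g σ f) {δ : Δ}
    (hδ : g (fun _ => δ) = fun _ => δ) (x : Fin k → Δ) :
    coordsNe δ (g x) = σ • coordsNe δ x := by
  have hfδ : ∀ i, f i δ = δ := fun i => (h.2 _ i).symm.trans (congrFun hδ i)
  ext i
  rw [← Finset.inv_smul_mem_iff]
  simp only [coordsNe, Finset.mem_filter, Finset.mem_univ, true_and, h.2, Equiv.Perm.smul_def,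
    Equiv.Perm.inv_def]
  rw [← hfδ i, (f i).injective.ne_iff, hfδ]

end IsProductForm

section ProductAction

variable {Δ : Type*} [Nontrivial Δ] {k : ℕ} {H : Subgroup (Equiv.Perm Δ)}
  {G : Subgroup (Equiv.Perm (Fin k → Δ))}
  (hprod : ∀ g ∈ G, ∃ (σ : Equiv.Perm (Fin k)) (f : Fin k → Equiv.Perm Δ), IsProductForm k H g σ f)

/-- The natural projection `G → S_k`; its range is the group `K`. -/
noncomputable def topProj : G →* Equiv.Perm (Fin k) where
  toFun g := (hprod g g.2).choose
  map_one' := by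
    obtain ⟨f, hf⟩ := (hprod 1 G.one_mem).choose_spec
    exact hf.perm_unique IsProductForm.one
  map_mul' g g' := by
    obtain ⟨f, hf⟩ := (hprod _ (g * g').2).choose_spec
    obtain ⟨f₁, hf₁⟩ := (hprod g g.2).choose_spec
    obtain ⟨f₂, hf₂⟩ := (hprod g' g'.2).choose_spec
    exact hf.perm_unique (hf₁.mul hf₂)

theorem exists_isProductForm_topProj (g : G) : ∃ f, IsProductForm k H g (topProj hprod g) f :=
  (hprod g g.2).choose_spec

theorem topProj_eq {g : G} {σ : Equiv.Perm (Fin k)} {f : Fin k → Equiv.Perm Δ}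
    (h : IsProductForm k H g σ f) : topProj hprod g = σ :=
  (exists_isProductForm_topProj hprod g).choose_spec.perm_unique h

theorem setOf_isProductForm_image_eq_orbit (J : Finset (Fin k)) :
    {J' : Finset (Fin k) | ∃ g ∈ G, ∃ (σ : Equiv.Perm (Fin k)) (f : Fin k → Equiv.Perm Δ),
      IsProductForm k H g σ f ∧ J' = J.image σ} = orbit (topProj hprod).range J := by
  ext J'
  simp only [Set.mem_ofPred_eq, mem_orbit_iff, Subtype.exists, MonoidHom.mem_range,
    Subgroup.mk_smul, Finset.smul_finset_def, Equiv.Perm.smul_def]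
  constructor
  · rintro ⟨g, hg, σ, f, hf, rfl⟩
    exact ⟨σ, ⟨g, hg, topProj_eq hprod (g := ⟨g, hg⟩) hf⟩, rfl⟩
  · rintro ⟨_, ⟨g, hg, rfl⟩, rfl⟩
    obtain ⟨f, hf⟩ := exists_isProductForm_topProj hprod ⟨g, hg⟩
    exact ⟨g, hg, _, f, hf, rfl⟩

theorem coordsNe_smul [DecidableEq Δ] {δ : Δ} (s : stabilizer G (fun _ : Fin k => δ))
    (x : Fin k → Δ) :
    coordsNe δ (s • x) = (topProj hprod).comp (stabilizer G _).subtype s • coordsNe δ x := by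
  obtain ⟨f, hf⟩ := exists_isProductForm_topProj hprod s
  exact hf.coordsNe_apply s.2 x

end ProductAction

theorem stmt19 {Δ : Type*} [Finite Δ] [Nontrivial Δ] (k : ℕ) (hk : 2 ≤ k)
    (H : Subgroup (Equiv.Perm Δ)) (G : Subgroup (Equiv.Perm (Fin k → Δ)))
    (hGprim : IsPrimitiveAction G (Fin k → Δ))
    (hprod : ∀ g ∈ G, ∃ (σ : Equiv.Perm (Fin k)) (f : Fin k → Equiv.Perm Δ),
      IsProductForm k H g σ f)
    (ℓ : ℕ) (J : Finset (Fin k))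
    (horb : Nat.card {J' : Finset (Fin k) |
      ∃ g ∈ G, ∃ (σ : Equiv.Perm (Fin k)) (f : Fin k → Equiv.Perm Δ),
        IsProductForm k H g σ f ∧ J' = J.image σ} = ℓ) :
    ∃ α β : Fin k → Δ,
      ℓ ∣ Nat.card (MulAction.orbit (MulAction.stabilizer G α) β) := by
  classical
  have := hGprim.isPreprimitive
  obtain ⟨δ, δ', hδ⟩ := exists_pair_ne Δ
  let α : Fin k → Δ := fun _ => δ
  let β : Fin k → Δ := fun i => if i ∈ J then δ' else δ
  have hβ : coordsNe δ β = J := by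
    ext i
    by_cases hi : i ∈ J <;> simp [coordsNe, β, hi, hδ.symm]
  have hK : ((topProj hprod).comp (stabilizer G α).subtype).range = (topProj hprod).range :=
    range_comp_stabilizer_subtype _ (not_injective_of_isPretransitive_pi Δ (by omega) _) α
  refine ⟨α, β, ?_⟩
  rw [← horb, setOf_isProductForm_image_eq_orbit hprod, ← hK, ← hβ]
  exact card_orbit_range_dvd_of_map_smul _ _ (coordsNe_smul hprod) β
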